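/- Let P(x) = ∑_{n=0}^{N−1} a_n x^n with all a_n = ±1, a_0 = 1, and suppose P is a product of cyclotomic polynomials (up to sign). Let i be minimal with a_i = −1 (assume 2 ≤ i ≤ N−1) and let S_k be the k-th power sum of the roots of P. If S_k = −1 for every k with 1 ≤ k ≤ N−2 not divisible by i, then P(x) = (1 + x + ⋯ + x^{i−1})·Q(x^i) for some polynomial Q(y) = ∑_{l=0}^{N/i−1} b_l y^l with all b_l = ±1. -/

import Mathlib

/-!
Let `B k` be the coefficients of the reversed polynomial, so `B k = ± lc(P) · e_k(roots)`, and
Newton's identities read `k B_k = -∑_{j<k} B_j S_{k-j}`. Subtracting the identities for `k` and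
`k + 1` gives `(k+1)(B_{k+1} - B_k) = -∑_{j<k} (B_{j+1} - B_j)(S_{k-j} + 1)`, and since
`S_m = -1` unless `i ∣ m`, induction on `k` yields `B_{k+1} = B_k` whenever `i ∤ k + 1`.
Read forwards, the coefficients of `P` are constant between consecutive indices `≡ N (mod i)`;
as `a_0 = ⋯ = a_{i-1} = 1 ≠ a_i`, this forces `i ∣ N`, and then `P` is constant on each block
`[l i, l i + i)`, which is the factorization `P = (1 + ⋯ + x^{i-1}) Q(x^i)`.
-/

open Polynomial Finset

theorem Nat.apply_eq_of_forall_succ_eq {α : Type*} {f : ℕ → α} {a b : ℕ} (hab : a ≤ b)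
    (h : ∀ n, a ≤ n → n < b → f (n + 1) = f n) : f b = f a := by
  induction b, hab using Nat.le_induction with
  | base => rfl
  | succ b hab ih => rw [h b hab (by omega), ih fun n h₁ h₂ => h n h₁ (by omega)]

theorem Nat.apply_eq_apply_div_mul {α : Type*} {f : ℕ → α} {p : ℕ}
    (h : ∀ n, ¬ p ∣ n + 1 → f (n + 1) = f n) (n : ℕ) : f n = f (n / p * p) := by
  induction n with
  | zero => simp
  | succ n ih =>
    by_cases hdvd : p ∣ n + 1
    · rw [Nat.div_mul_cancel hdvd]
    · rw [h n hdvd, Nat.succ_div_of_not_dvd hdvd, ih]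

theorem Nat.dvd_of_forall_succ_eq {α : Type*} {f : ℕ → α} {N i : ℕ}
    (hi : 0 < i) (hiN : i < N)
    (hstep : ∀ n, 1 ≤ n → n + 1 < N → ¬ i ∣ N - (n + 1) → f (n + 1) = f n)
    (hne : ∀ n, 0 < n → n < i → f n ≠ f i) : i ∣ N := by
  by_contra hdvd
  have hs0 : N % i ≠ 0 := mt Nat.dvd_of_mod_eq_zero hdvd
  have hs : N % i < i := Nat.mod_lt N hi
  refine hne (N % i) (Nat.pos_of_ne_zero hs0) hs (Nat.apply_eq_of_forall_succ_eq hs.le ?_).symm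
  intro n hsn hni
  refine hstep n (by omega) (by omega) fun hn => ?_
  have hsub := Nat.dvd_sub (Nat.dvd_sub_mod N) hn
  rw [show N - N % i - (N - (n + 1)) = n + 1 - N % i by have := Nat.mod_le N i; omega] at hsub
  exact absurd (Nat.le_of_dvd (by omega) hsub) (by omega)

theorem succ_eq_of_newton_recurrence {K : Type*} [Field K] [CharZero K]
    {B S : ℕ → K} {i M : ℕ}
    (hB : ∀ k ≤ M, (k : K) * B k = -∑ j ∈ range k, B j * S (k - j))
    (hS : ∀ j, 1 ≤ j → j ≤ M → ¬ i ∣ j → S j = -1) :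
    ∀ k, k + 1 ≤ M → ¬ i ∣ k + 1 → B (k + 1) = B k := by
  intro k
  -- Subtracting the identities for `k` and `k + 1`:
  -- `(k+1)(B_{k+1} - B_k) = -∑_{j<k} (B_{j+1} - B_j)(S_{k-j} + 1)`, and every term vanishes.
  induction k using Nat.strong_induction_on with
  | _ k ih =>
  intro hkM hk
  have hterm : ∀ j ∈ range k, (B (j + 1) - B j) * (S (k - j) + 1) = 0 := by
    intro j hj
    have hjk := mem_range.mp hj
    by_cases hdvd : i ∣ k - j
    · have hj1 : ¬ i ∣ j + 1 := fun h => hk (by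
        simpa [show k - j + (j + 1) = k + 1 by omega] using Nat.dvd_add hdvd h)
      rw [ih j hjk (by omega) hj1, sub_self, zero_mul]
    · rw [hS (k - j) (by omega) (by omega) hdvd, neg_add_cancel, mul_zero]
  have hzero : ∑ j ∈ range k, B (j + 1) * S (k - j) - ∑ j ∈ range k, B j * S (k - j)
      + (B k - B 0) = 0 := by
    rw [← sum_range_sub, ← sum_sub_distrib, ← sum_add_distrib, ← sum_eq_zero hterm]
    exact sum_congr rfl fun j _ => by ring
  have hsucc := hB (k + 1) hkM
  rw [sum_range_succ'] at hsucc
  simp only [Nat.add_sub_add_right, Nat.sub_zero, hS (k + 1) le_add_self hkM hk] at hsucc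
  have hmul : ((k : K) + 1) * (B (k + 1) - B k) = 0 := by
    push_cast at hsucc
    linear_combination hsucc - hB k (by omega) - hzero
  have hk1 : (k : K) + 1 ≠ 0 := by exact_mod_cast k.succ_ne_zero
  exact sub_eq_zero.mp ((mul_eq_zero.mp hmul).resolve_left hk1)

theorem Multiset.mul_esymm_eq_sum_range {R : Type*} [CommRing R] (s : Multiset R) (k : ℕ) :
    k * s.esymm k = (-1) ^ (k + 1) *
      ∑ j ∈ Finset.range k, (-1) ^ j * s.esymm j * (s.map (· ^ (k - j))).sum := by
  obtain ⟨l, rfl⟩ : ∃ l : List R, (l : Multiset R) = s := ⟨s.toList, s.coe_toList⟩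
  have hl : Multiset.map l.get Finset.univ.val = (l : Multiset R) := by
    simp [Fin.univ_val_map]
  have h := congrArg (MvPolynomial.aeval l.get)
    (MvPolynomial.mul_esymm_eq_sum (Fin l.length) R k)
  simp only [map_mul, map_sum, map_pow, map_neg, map_one, map_natCast,
    MvPolynomial.aeval_esymm_eq_multiset_esymm, hl] at h
  rw [h, Finset.sum_filter, Finset.Nat.sum_antidiagonal_eq_sum_range_succ_mk, sum_range_succ]
  simp only [lt_self_iff_false, if_false, add_zero]
  congr 1
  refine sum_congr rfl fun j hj => ?_
  rw [if_pos (mem_range.mp hj)]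
  simp only [MvPolynomial.psum, map_sum, map_pow, MvPolynomial.aeval_X]
  rw [Finset.sum, ← hl, Multiset.map_map]
  rfl

namespace Polynomial

section Roots

variable {R : Type*} [CommRing R] [IsDomain R]

noncomputable def rootPowerSum (p : R[X]) (k : ℕ) : R :=
  (p.roots.map (· ^ k)).sum

theorem coeff_reverse_eq_esymm_roots {p : R[X]} (hroots : p.roots.card = p.natDegree) (k : ℕ) :
    p.reverse.coeff k = p.leadingCoeff * (-1) ^ k * p.roots.esymm k := by
  rw [coeff_reverse]
  rcases le_or_gt k p.natDegree with hk | hk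
  · rw [revAt_le hk, coeff_eq_esymm_roots_of_card hroots (Nat.sub_le _ _), Nat.sub_sub_self hk]
  · rw [revAt_eq_self_of_lt hk, coeff_eq_zero_of_natDegree_lt hk,
      Multiset.esymm, Multiset.powersetCard_eq_empty _ (hroots ▸ hk)]
    simp

theorem mul_coeff_reverse_eq_neg_sum {p : R[X]} (hroots : p.roots.card = p.natDegree) (k : ℕ) :
    (k : R) * p.reverse.coeff k =
      -∑ j ∈ range k, p.reverse.coeff j * p.rootPowerSum (k - j) := by
  simp only [coeff_reverse_eq_esymm_roots hroots, rootPowerSum]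
  have hsign : (-1 : R) ^ k * (-1) ^ (k + 1) = -1 := by
    rw [← pow_add, ← add_assoc, ← two_mul, pow_succ, pow_mul]
    simp
  rw [mul_left_comm, mul_assoc, Multiset.mul_esymm_eq_sum_range, mul_sum, mul_sum, mul_sum,
    ← sum_neg_distrib]
  refine Finset.sum_congr rfl fun j _ => ?_
  linear_combination p.leadingCoeff * (-1) ^ j * p.roots.esymm j *
    (p.roots.map (· ^ (k - j))).sum * hsign

end Roots

theorem coeff_succ_eq_of_rootPowerSum_eq_neg_one {K : Type*} [Field K] [CharZero K]
    {p : K[X]} (hroots : p.roots.card = p.natDegree) {i : ℕ}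
    (hS : ∀ k, 1 ≤ k → k < p.natDegree → ¬ i ∣ k → p.rootPowerSum k = -1)
    {n : ℕ} (hn : 1 ≤ n) (hnd : n < p.natDegree) (hdvd : ¬ i ∣ p.natDegree - n) :
    p.coeff (n + 1) = p.coeff n := by
  have h := succ_eq_of_newton_recurrence (M := p.natDegree - 1)
    (fun k _ => mul_coeff_reverse_eq_neg_sum hroots k) (fun j h₁ h₂ => hS j h₁ (by omega))
    (p.natDegree - (n + 1)) (by omega)
    (by rwa [show p.natDegree - (n + 1) + 1 = p.natDegree - n by omega])
  rwa [coeff_reverse, coeff_reverse, revAt_le (by omega), revAt_le (by omega),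
    show p.natDegree - (p.natDegree - (n + 1) + 1) = n by omega,
    show p.natDegree - (p.natDegree - (n + 1)) = n + 1 by omega, eq_comm] at h

section Contract

variable {R : Type*} [CommSemiring R] {p : ℕ}

theorem natDegree_contract_le (hp : p ≠ 0) (f : R[X]) :
    (contract p f).natDegree ≤ f.natDegree / p := by
  refine natDegree_le_iff_coeff_eq_zero.mpr fun n hn => ?_
  rw [coeff_contract hp]
  exact coeff_eq_zero_of_natDegree_lt ((Nat.div_lt_iff_lt_mul (Nat.pos_of_ne_zero hp)).mp hn)

theorem eq_geom_sum_mul_expand_contract (hp : p ≠ 0) {f : R[X]}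
    (hf : ∀ n, f.coeff n = f.coeff (n / p * p)) :
    f = (∑ j ∈ range p, X ^ j) * expand R p (contract p f) := by
  ext n
  simp only [sum_mul, finsetSum_coeff, coeff_X_pow_mul', coeff_expand (Nat.pos_of_ne_zero hp)]
  rw [sum_eq_single (n % p)]
  · rw [if_pos (Nat.mod_le n p), if_pos (Nat.dvd_sub_mod n), ← Nat.div_eq_sub_mod_div,
      coeff_contract hp, hf]
  · intro j hj hjn
    refine ite_eq_right_iff.mpr fun hjle => if_neg fun hdvd => hjn ?_
    have hmod : j % p = n % p := (Nat.modEq_iff_dvd' hjle).mpr hdvd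
    rwa [Nat.mod_eq_of_lt (mem_range.mp hj)] at hmod
  · exact fun h => absurd (mem_range.mpr (Nat.mod_lt n (Nat.pos_of_ne_zero hp))) h

end Contract

end Polynomial

theorem littlewood_cyclotomic_block_factorization_general (N i : ℕ) (P : Polynomial ℤ)
    (hdeg : P.natDegree = N - 1)
    (hcoeff : ∀ n ≤ N - 1, P.coeff n = 1 ∨ P.coeff n = -1)
    (hi1 : 2 ≤ i) (hi2 : i ≤ N - 1)
    (hones : ∀ n < i, P.coeff n = 1) (hneg : P.coeff i = -1)
    (S : ℕ → ℂ)
    (hS : ∀ k, S k = (((P.map (Int.castRingHom ℂ)).roots).map (fun r => r ^ k)).sum)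
    (hSk : ∀ k, 1 ≤ k → k ≤ N - 2 → ¬ i ∣ k → S k = -1) :
    ∃ Q : Polynomial ℤ, Q.natDegree = N / i - 1 ∧
      (∀ l ≤ N / i - 1, Q.coeff l = 1 ∨ Q.coeff l = -1) ∧
      P = (∑ n ∈ Finset.range i, (X : Polynomial ℤ) ^ n) * Q.comp (X ^ i) := by
  have hi0 : i ≠ 0 := by omega
  have hstep :
      ∀ n, 1 ≤ n → n + 1 < N → ¬ i ∣ N - (n + 1) → P.coeff (n + 1) = P.coeff n := by
    intro n hn hnN hdvd
    have hdegC : (P.map (Int.castRingHom ℂ)).natDegree = N - 1 := by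
      rw [natDegree_map_eq_of_injective (RingHom.injective_int _), hdeg]
    have h := coeff_succ_eq_of_rootPowerSum_eq_neg_one
      (splits_iff_card_roots.mp (IsAlgClosed.splits _))
      (fun k h₁ h₂ h₃ => (hS k).symm.trans (hSk k h₁ (by omega) h₃)) hn (by omega)
      (by rwa [hdegC, show N - 1 - n = N - (n + 1) by omega])
    simpa only [coeff_map, eq_intCast, Int.cast_inj] using h
  have hiN : i ∣ N := Nat.dvd_of_forall_succ_eq (by omega) (by omega) hstep
    fun n hn hni => by rw [hones n hni, hneg]; decide
  have hsucc : ∀ n, ¬ i ∣ n + 1 → P.coeff (n + 1) = P.coeff n := by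
    intro n hn
    rcases Nat.eq_zero_or_pos n with rfl | hn0
    · rw [hones 1 (by omega), hones 0 (by omega)]
    rcases lt_or_ge (n + 1) N with hnN | hnN
    · exact hstep n hn0 hnN (by rwa [Nat.dvd_sub_iff_right hnN.le hiN])
    · have : N < n + 1 := lt_of_le_of_ne hnN fun h => hn (h ▸ hiN)
      rw [coeff_eq_zero_of_natDegree_lt (by omega), coeff_eq_zero_of_natDegree_lt (by omega)]
  have hdegQ : (contract i P).natDegree < N / i := (natDegree_contract_le hi0 P).trans_lt <| by
    rw [hdeg, Nat.div_lt_iff_lt_mul (by omega), Nat.div_mul_cancel hiN]; omega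
  have hQcoeff : ∀ l ≤ N / i - 1, (contract i P).coeff l = 1 ∨ (contract i P).coeff l = -1 :=
    fun l hl => coeff_contract hi0 P l ▸ hcoeff _ (Nat.le_sub_one_of_lt <| by
      rw [← mul_comm, ← Nat.lt_div_iff_mul_lt' hiN]; exact Nat.lt_of_le_sub_one (by omega) hl)
  refine ⟨contract i P, natDegree_eq_of_le_of_coeff_ne_zero (Nat.le_sub_one_of_lt hdegQ) ?_,
    hQcoeff, ?_⟩
  · rcases hQcoeff _ le_rfl with h | h <;> rw [h] <;> decide
  · rw [← expand_eq_comp_X_pow]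
    exact eq_geom_sum_mul_expand_contract hi0 (Nat.apply_eq_apply_div_mul hsucc)

theorem littlewood_cyclotomic_block_factorization (N i : ℕ) (P : Polynomial ℤ) (hN : 2 ≤ N)
    (hdeg : P.natDegree = N - 1)
    (hcoeff : ∀ n ≤ N - 1, P.coeff n = 1 ∨ P.coeff n = -1)
    (ha0 : P.coeff 0 = 1)
    (hcyc : ∃ (c : ℤ) (D : ℕ) (e : ℕ → ℕ), (c = 1 ∨ c = -1) ∧
      P = C c * ∏ d ∈ Finset.Icc 1 D, (cyclotomic d ℤ) ^ e d)
    (hi1 : 2 ≤ i) (hi2 : i ≤ N - 1)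
    (hones : ∀ n < i, P.coeff n = 1) (hneg : P.coeff i = -1)
    (S : ℕ → ℂ)
    (hS : ∀ k, S k = (((P.map (Int.castRingHom ℂ)).roots).map (fun r => r ^ k)).sum)
    (hSk : ∀ k, 1 ≤ k → k ≤ N - 2 → ¬ i ∣ k → S k = -1) :
    ∃ Q : Polynomial ℤ, Q.natDegree = N / i - 1 ∧
      (∀ l ≤ N / i - 1, Q.coeff l = 1 ∨ Q.coeff l = -1) ∧
      P = (∑ n ∈ Finset.range i, (X : Polynomial ℤ) ^ n) * Q.comp (X ^ i) :=
  littlewood_cyclotomic_block_factorization_general N i P hdeg hcoeff hi1 hi2 hones hneg S hS hSk
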